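/- In a cut quiver Q^{(d,n)}_C, if a vertex x is the source of one distinguished cut (d+1)-path (remainder of a distinguished (d+1)-cycle after removing its cut arrow) and the sink of another, then the two removed arrows have the same type. -/

import Mathlib

/-- Vertices of Q^{(d,n)}: nonnegative integer (d+1)-tuples with coordinate sum n - 1. -/
def QVtx (d n : ℕ) (A : Fin (d+1) → ℤ) : Prop :=
  (∀ j, 0 ≤ A j) ∧ (∑ j, A j) = (n : ℤ) - 1

/-- f_i = -E_i + E_{i+1} (indices cyclic mod d+1). -/
def fvec (d : ℕ) (i : Fin (d+1)) : Fin (d+1) → ℤ :=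
  fun j => (if j = i + 1 then 1 else 0) - (if j = i then 1 else 0)

/-- The k-th vertex of the (d+1)-cycle starting at A whose arrow types are
σ 0, σ 1, …, σ d in order. -/
def cycVert (d : ℕ) (A : Fin (d+1) → ℤ) (σ : Fin (d+1) → Fin (d+1)) (k : Fin (d+1)) :
    Fin (d+1) → ℤ :=
  A + ∑ l ∈ Finset.univ.filter (fun l : Fin (d+1) => (l : ℕ) < (k : ℕ)), fvec d (σ l)

/-- (A, σ) describes a (d+1)-cycle of Q^{(d,n)}: σ is a bijection on the set of
types (each type occurs exactly once in a (d+1)-cycle) and all vertices along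
the cycle are vertices of Q^{(d,n)}. -/
def IsCycle (d n : ℕ) (A : Fin (d+1) → ℤ) (σ : Fin (d+1) → Fin (d+1)) : Prop :=
  Function.Bijective σ ∧ ∀ k, QVtx d n (cycVert d A σ k)

/-- The cycle is distinguished: its types occur in the cyclic order
f_t, f_{t-1}, …, f_{t+1}. -/
def IsDist (d : ℕ) (σ : Fin (d+1) → Fin (d+1)) : Prop :=
  ∃ t : Fin (d+1), ∀ k, σ k = t - k

/-- A cut of Q^{(d,n)}: a set of arrows (encoded as pairs (tail, type)) containing
exactly one arrow from each (d+1)-cycle. -/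
def IsCut (d n : ℕ) (C : Set ((Fin (d+1) → ℤ) × Fin (d+1))) : Prop :=
  (∀ p ∈ C, QVtx d n p.1 ∧ QVtx d n (p.1 + fvec d p.2)) ∧
  ∀ A σ, IsCycle d n A σ → ∃! k : Fin (d+1), (cycVert d A σ k, σ k) ∈ C

/-!
Let `x` be the head of the first cut arrow, of type `a`, and the tail of the second, of type `b`.
In a distinguished cycle the types decrease by one at each step, so every vertex of it has all
coordinates positive except possibly the one indexed by (type of the outgoing arrow) + 1.
If `a = b + 1`, the arrow of type `b` leaving `x` is the next arrow of the first cycle, which would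
then contain two cut arrows. Otherwise `x` has all coordinates positive, so every ordering of the
types is a cycle through `x`; taking one that starts with the arrow of type `b` and ends with the
arrow of type `a`, the cut forces `a = b`.
-/

open scoped Fin.CommRing
open Finset

lemma Equiv.Perm.exists_apply_eq_apply_eq {α : Type*} [DecidableEq α] {i j a b : α}
    (hij : i ≠ j) (hab : a ≠ b) : ∃ τ : Equiv.Perm α, τ i = a ∧ τ j = b := by
  set c := Equiv.swap i a j
  have hac : a ≠ c := fun h => hij ((Equiv.swap i a).injective (by simp [c, ← h]))
  exact ⟨(Equiv.swap i a).trans (Equiv.swap c b),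
    by simp [Equiv.swap_apply_of_ne_of_ne hac hab], by simp [c]⟩

section

variable {d n : ℕ}

lemma fvec_eq (i : Fin (d+1)) : fvec d i = Pi.single (i + 1) 1 - Pi.single i 1 := by
  ext j
  simp [fvec, Pi.single_apply]

lemma sum_fvec : ∑ i, fvec d i = 0 := by
  simp only [fvec_eq, sum_sub_distrib, sub_eq_zero]
  exact Equiv.sum_comp (Equiv.addRight (1 : Fin (d+1))) (fun i => Pi.single i (1 : ℤ))

lemma sum_fvec_apply (i : Fin (d+1)) : ∑ j, fvec d i j = 0 := by
  simp [fvec_eq, sum_sub_distrib]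

lemma cycVert_eq_sum_Iio (A : Fin (d+1) → ℤ) (σ : Fin (d+1) → Fin (d+1)) (m : Fin (d+1)) :
    cycVert d A σ m = A + ∑ l ∈ Iio m, fvec d (σ l) := by
  rw [cycVert]
  congr 2
  ext l
  simp only [mem_filter, mem_univ, true_and, mem_Iio]
  exact Fin.lt_def.symm

@[simp] lemma cycVert_zero (A : Fin (d+1) → ℤ) (σ : Fin (d+1) → Fin (d+1)) :
    cycVert d A σ 0 = A := by
  simp [cycVert]

lemma cycVert_add_one (A : Fin (d+1) → ℤ) {σ : Fin (d+1) → Fin (d+1)} (hσ : σ.Bijective)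
    (m : Fin (d+1)) : cycVert d A σ (m + 1) = cycVert d A σ m + fvec d (σ m) := by
  induction m using Fin.lastCases with
  | last =>
    have hIio : Iio (Fin.last d) = univ.erase (Fin.last d) := by
      ext l
      simp only [mem_Iio, mem_erase, mem_univ, and_true]
      exact Fin.lt_last_iff_ne_last
    rw [Fin.last_add_one, cycVert_zero, cycVert_eq_sum_Iio, hIio, add_assoc,
      sum_erase_add _ _ (mem_univ _), hσ.sum_comp (fvec d), sum_fvec, add_zero]
  | cast i =>
    have hIio : Iio i.succ = insert i.castSucc (Iio i.castSucc) := by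
      ext l
      simp [Fin.lt_def, Fin.le_def]
    rw [Fin.coeSucc_eq_succ, cycVert_eq_sum_Iio, cycVert_eq_sum_Iio, hIio,
      sum_insert (by simp), add_comm (fvec d _), add_assoc]

lemma sum_cycVert_apply (A : Fin (d+1) → ℤ) (σ : Fin (d+1) → Fin (d+1)) (m : Fin (d+1)) :
    ∑ j, cycVert d A σ m j = ∑ j, A j := by
  rw [cycVert_eq_sum_Iio]
  simp only [Pi.add_apply, sum_add_distrib, Finset.sum_apply]
  rw [sum_comm]
  simp [sum_fvec_apply]

/-- Along a cycle each coordinate is decreased at most once, by the unique arrow of its type. -/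
lemma sub_one_le_cycVert_apply (A : Fin (d+1) → ℤ) {σ : Fin (d+1) → Fin (d+1)}
    (hσ : σ.Bijective) (m j : Fin (d+1)) : A j - 1 ≤ cycVert d A σ m j := by
  have hsingle : ∀ i, 0 ≤ (Pi.single i 1 : Fin (d+1) → ℤ) j := fun i => by
    rw [Pi.single_apply]
    positivity
  have hin : 0 ≤ ∑ l ∈ Iio m, (Pi.single (σ l + 1) 1 : Fin (d+1) → ℤ) j :=
    sum_nonneg fun l _ => hsingle _
  have hout : ∑ l ∈ Iio m, (Pi.single (σ l) 1 : Fin (d+1) → ℤ) j ≤ 1 := calc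
    _ ≤ ∑ l, (Pi.single (σ l) 1 : Fin (d+1) → ℤ) j :=
      sum_le_sum_of_subset_of_nonneg (subset_univ _) fun l _ _ => hsingle _
    _ = ∑ i, (Pi.single i 1 : Fin (d+1) → ℤ) j :=
      hσ.sum_comp fun i => (Pi.single i 1 : Fin (d+1) → ℤ) j
    _ = 1 := by simp
  rw [cycVert_eq_sum_Iio]
  simp only [fvec_eq, Pi.add_apply, Finset.sum_apply, Pi.sub_apply, sum_sub_distrib]
  linarith

lemma isCycle_of_one_le {A : Fin (d+1) → ℤ} {σ : Fin (d+1) → Fin (d+1)} (hA : QVtx d n A)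
    (hpos : ∀ i, 1 ≤ A i) (hσ : σ.Bijective) : IsCycle d n A σ :=
  ⟨hσ, fun m => ⟨fun j => by linarith [hpos j, sub_one_le_cycVert_apply A hσ m j],
    by rw [sum_cycVert_apply]; exact hA.2⟩⟩

lemma IsDist.bijective {σ : Fin (d+1) → Fin (d+1)} (hσ : IsDist d σ) : σ.Bijective := by
  obtain ⟨t, ht⟩ := hσ
  obtain rfl : σ = fun k => t - k := funext ht
  exact (Equiv.subLeft t).bijective

lemma IsDist.apply_add_one {σ : Fin (d+1) → Fin (d+1)} (hσ : IsDist d σ) (m : Fin (d+1)) :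
    σ (m + 1) + 1 = σ m := by
  obtain ⟨t, ht⟩ := hσ
  rw [ht, ht]
  ring

/-- In a distinguished cycle the types run downwards, so the walk from the `m`-th vertex to
any other one telescopes. -/
lemma cycVert_eq_of_isDist (A : Fin (d+1) → ℤ) {σ : Fin (d+1) → Fin (d+1)} (hσ : IsDist d σ)
    (m j : Fin (d+1)) :
    cycVert d A σ j = cycVert d A σ m + Pi.single (σ m + 1) 1 - Pi.single (σ j + 1) 1 := by
  suffices h : ∀ s : ℕ, cycVert d A σ (m + s) =
      cycVert d A σ m + Pi.single (σ m + 1) 1 - Pi.single (σ (m + s) + 1) 1 by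
    simpa using h (j - m).val
  intro s
  induction s with
  | zero => simp
  | succ s ih =>
    rw [Nat.cast_succ, ← add_assoc, cycVert_add_one A hσ.bijective, ih, fvec_eq,
      ← hσ.apply_add_one (m + s)]
    abel

lemma one_le_cycVert_apply {A : Fin (d+1) → ℤ} {σ : Fin (d+1) → Fin (d+1)}
    (hcyc : IsCycle d n A σ) (hσ : IsDist d σ) {m i : Fin (d+1)} (hi : i ≠ σ m + 1) :
    1 ≤ cycVert d A σ m i := by
  obtain ⟨j, hj⟩ := hcyc.1.2 (i - 1)
  have h := (hcyc.2 j).1 i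
  rw [cycVert_eq_of_isDist A hσ m j, hj, sub_add_cancel] at h
  simpa [Pi.single_apply, hi] using h

lemma IsCut.eq_of_mem {C : Set ((Fin (d+1) → ℤ) × Fin (d+1))} (hC : IsCut d n C)
    {A : Fin (d+1) → ℤ} {σ : Fin (d+1) → Fin (d+1)} (hcyc : IsCycle d n A σ) {m m' : Fin (d+1)}
    (hm : (cycVert d A σ m, σ m) ∈ C) (hm' : (cycVert d A σ m', σ m') ∈ C) : m = m' :=
  (hC.2 A σ hcyc).unique hm hm'

lemma IsCut.eq_of_mem_of_one_le {C : Set ((Fin (d+1) → ℤ) × Fin (d+1))} (hC : IsCut d n C)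
    {x : Fin (d+1) → ℤ} (hx : QVtx d n x) (hpos : ∀ i, 1 ≤ x i) {a b : Fin (d+1)}
    (ha : (x - fvec d a, a) ∈ C) (hb : (x, b) ∈ C) : a = b := by
  by_contra hab
  have : Nontrivial (Fin (d+1)) := ⟨⟨a, b, hab⟩⟩
  obtain ⟨τ, hτ0, hτa⟩ := Equiv.Perm.exists_apply_eq_apply_eq (neg_ne_zero.2 one_ne_zero).symm
    (Ne.symm hab)
  have hcyc := isCycle_of_one_le hx hpos τ.bijective
  have hlast : cycVert d x τ (-1) = x - fvec d a := by
    rw [eq_sub_iff_add_eq, ← hτa, ← cycVert_add_one x τ.bijective, neg_add_cancel, cycVert_zero]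
  have h := hC.eq_of_mem hcyc (m := 0) (m' := -1) (by simpa [hτ0]) (by rwa [hlast, hτa])
  exact one_ne_zero (neg_eq_zero.1 h.symm)

end

/-- In a cut quiver Q^{(d,n)}_C, if a vertex x is the source of one
distinguished cut (d+1)-path (the head of the cut arrow of one distinguished
(d+1)-cycle) and the sink of another (the tail of the cut arrow of another
distinguished (d+1)-cycle), then the two removed arrows have the same type. -/
theorem adjacent_cut_cycles_same_type (d n : ℕ)
    (C : Set ((Fin (d+1) → ℤ) × Fin (d+1))) (hC : IsCut d n C)
    (A A' : Fin (d+1) → ℤ) (σ σ' : Fin (d+1) → Fin (d+1)) (k k' : Fin (d+1))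
    (hcyc : IsCycle d n A σ) (hdist : IsDist d σ)
    (hcyc' : IsCycle d n A' σ') (hdist' : IsDist d σ')
    (hkC : (cycVert d A σ k, σ k) ∈ C)
    (hk'C : (cycVert d A' σ' k', σ' k') ∈ C)
    (hx : cycVert d A σ k + fvec d (σ k) = cycVert d A' σ' k') :
    σ k = σ' k' := by
  have hxk : cycVert d A σ (k + 1) = cycVert d A' σ' k' := (cycVert_add_one A hcyc.1 k).trans hx
  by_cases hsucc : σ k = σ' k' + 1
  · by_contra hab
    have : Nontrivial (Fin (d+1)) := ⟨⟨_, _, hab⟩⟩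
    have hσk : σ (k + 1) = σ' k' := add_right_cancel ((hdist.apply_add_one k).trans hsucc)
    have h := hC.eq_of_mem hcyc (by rwa [hxk, hσk]) hkC
    exact one_ne_zero (add_eq_left.1 h)
  · refine hC.eq_of_mem_of_one_le (hcyc'.2 k') (fun i => ?_) (by rwa [← hx, add_sub_cancel_right])
      hk'C
    by_cases hi : i = σ k
    · exact one_le_cycVert_apply hcyc' hdist' (hi ▸ hsucc)
    · rw [← hxk]
      exact one_le_cycVert_apply hcyc hdist (by rwa [hdist.apply_add_one])
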